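/- arXiv:math/0701603 — 4 statements merged into one kernel-verified Lean document; each statement's English description precedes it below -/
import Mathlib

section
/- For every lamp configuration θ ∈ {0,1}^X and every f ∈ L(X), the Markov operator of the vertex lamplighter walk satisfies 𝓜_X(χ_θ ⊗ f) = χ_θ ⊗ (M_θ f). -/
open Finset

noncomputable section

variable {V : Type*} [Fintype V] [DecidableEq V]

/-- The character `χ_θ(ω) = (−1)^{Σ_x θ(x)·ω(x)}` on lamp configurations `{0,1}^X`. -/
def lampChi (θ ω : V → ZMod 2) : ℂ := (-1 : ℂ) ^ (∑ x : V, (θ x * ω x).val)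

/-- `δ_x ∈ {0,1}^X`, the indicator configuration of the vertex `x`. -/
def lampDelta (x : V) : V → ZMod 2 := fun z => if z = x then 1 else 0

/-- The Markov operator `𝓜_X` of the simple random walk on the vertex lamplighter
graph `𝓛(X)`:
`(𝓜_X F)(ω,x) = (1/(4·deg x)) Σ_{y ~ x} [F(ω,y)+F(ω+δ_x,y)+F(ω+δ_y,y)+F(ω+δ_x+δ_y,y)]`. -/
def vertexLampM (G : SimpleGraph V) [DecidableRel G.Adj]
    (F : (V → ZMod 2) × V → ℂ) : (V → ZMod 2) × V → ℂ :=
  fun p =>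
    (1 / (4 * (G.degree p.2 : ℂ))) *
      ∑ y ∈ G.neighborFinset p.2,
        (F (p.1, y) + F (p.1 + lampDelta p.2, y) + F (p.1 + lampDelta y, y) +
          F (p.1 + lampDelta p.2 + lampDelta y, y))

/-- The operator `M_θ : L(X) → L(X)`:
`(M_θ f)(x) = (1/deg x) Σ_{y ∈ X_θ, y ~ x} f(y)` if `θ(x) = 0`, and `0` if `θ(x) = 1`. -/
def vertexMtheta (G : SimpleGraph V) [DecidableRel G.Adj] (θ : V → ZMod 2)
    (f : V → ℂ) : V → ℂ :=
  fun x =>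
    if θ x = 0 then
      (1 / (G.degree x : ℂ)) * ∑ y ∈ (G.neighborFinset x).filter (fun y => θ y = 0), f y
    else 0

def lampEps (a : ZMod 2) : ℂ := (-1 : ℂ) ^ a.val

lemma lampEps_add (a b : ZMod 2) : lampEps (a + b) = lampEps a * lampEps b := by
  rcases (show a = 0 ∨ a = 1 by revert a; decide) with rfl | rfl <;> rcases (show b = 0 ∨ b = 1 by revert b; decide) with rfl | rfl <;> norm_num [lampEps, show ((2:ZMod 2)).val = 0 from rfl, show ((1:ZMod 2) + 1) = 0 from rfl, show ((1:ZMod 2)).val = 1 from rfl]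

lemma lampChi_eq_prod (θ ω : V → ZMod 2) :
    lampChi θ ω = ∏ x : V, lampEps (θ x * ω x) := by
  simp [lampChi, lampEps, Finset.prod_pow_eq_pow_sum]

lemma lampChi_add_delta (θ ω : V → ZMod 2) (x : V) :
    lampChi θ (ω + lampDelta x) = lampEps (θ x) * lampChi θ ω := by
  rw [lampChi_eq_prod, lampChi_eq_prod]
  have : ∀ z : V, lampEps (θ z * (ω + lampDelta x) z)
      = lampEps (θ z * lampDelta x z) * lampEps (θ z * ω z) := by
    intro z
    rw [Pi.add_apply, mul_add, lampEps_add, mul_comm]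
  rw [Finset.prod_congr rfl (fun z _ => this z), Finset.prod_mul_distrib]
  congr 1
  rw [Fintype.prod_eq_single x (fun z hz => by simp [lampDelta, hz, lampEps])]
  simp [lampDelta]

lemma lampEps_one_add (a : ZMod 2) :
    (1 : ℂ) + lampEps a = if a = 0 then 2 else 0 := by
  rcases (show a = 0 ∨ a = 1 by revert a; decide) with rfl | rfl <;> norm_num [lampEps, show ((1:ZMod 2)).val = 1 from rfl]

/-- For every lamp configuration `θ ∈ {0,1}^X` and every `f ∈ L(X)`,
`𝓜_X(χ_θ ⊗ f) = χ_θ ⊗ (M_θ f)`. -/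
theorem vertex_lamplighter_intertwine (G : SimpleGraph V) [DecidableRel G.Adj]
    (hdeg : ∀ x : V, 0 < G.degree x) (θ : V → ZMod 2) (f : V → ℂ) :
    vertexLampM G (fun p => lampChi θ p.1 * f p.2)
      = fun p => lampChi θ p.1 * vertexMtheta G θ f p.2 := by
  funext p
  obtain ⟨ω, x⟩ := p
  simp only [vertexLampM, vertexMtheta]
  have hterm : ∀ y : V,
      lampChi θ ω * f y + lampChi θ (ω + lampDelta x) * f y
        + lampChi θ (ω + lampDelta y) * f y
        + lampChi θ (ω + lampDelta x + lampDelta y) * f y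
      = (1 + lampEps (θ x)) * (1 + lampEps (θ y)) * (lampChi θ ω * f y) := by
    intro y
    rw [lampChi_add_delta, lampChi_add_delta, lampChi_add_delta, lampChi_add_delta]
    ring
  rw [Finset.sum_congr rfl (fun y _ => hterm y)]
  by_cases hx : θ x = 0
  · have hd : ((G.degree x : ℂ)) ≠ 0 := Nat.cast_ne_zero.mpr (hdeg x).ne'
    rw [if_pos hx]
    have h2 : ∀ y ∈ G.neighborFinset x,
        (1 + lampEps (θ x)) * (1 + lampEps (θ y)) * (lampChi θ ω * f y)
          = 4 * lampChi θ ω * (if θ y = 0 then f y else 0) := by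
      intro y _
      rw [lampEps_one_add, lampEps_one_add, if_pos hx]
      split <;> ring
    rw [Finset.sum_congr rfl h2, ← Finset.mul_sum, Finset.sum_filter]
    field_simp
  · rw [if_neg hx, mul_zero]
    have h1 : (1 : ℂ) + lampEps (θ x) = 0 := by
      rw [lampEps_one_add, if_neg hx]
    rw [Finset.sum_eq_zero (fun y _ => by rw [h1]; ring)]
    ring
end
end

section
/- The Markov operator of the vertex lamplighter walk has the spectral decomposition 𝓜_X = Σ_{θ∈{0,1}^X} Σ_{j=1}^{h(θ)} λ_{θ,j} · (χ_θ ⊗ P_{θ,j}Q̃_θ), meaning that for every F ∈ L(𝓛(X)) one has 𝓜_X F = Σ_{θ∈{0,1}^X} Σ_{j=1}^{h(θ)} λ_{θ,j} · (χ_θ ⊗ P_{θ,j}(Q̃_θ F)). -/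
open Finset

noncomputable section

variable {V : Type*} [Fintype V] [DecidableEq V]

lemma zmod2_em (a : ZMod 2) : a = 0 ∨ a = 1 := by
  fin_cases a
  exacts [Or.inl rfl, Or.inr rfl]

lemma neg_one_pow_zmod_add (a b : ZMod 2) :
    ((-1:ℂ)) ^ ((a + b).val) = (-1:ℂ) ^ a.val * (-1:ℂ) ^ b.val := by
  rcases zmod2_em a with ha | ha <;> rcases zmod2_em b with hb | hb <;> subst ha <;> subst hb <;>
    simp [show ((1:ZMod 2)+1) = 0 from by decide, ZMod.val_one]

lemma lampChi_add (θ ω ω' : V → ZMod 2) :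
    lampChi θ (ω + ω') = lampChi θ ω * lampChi θ ω' := by
  unfold lampChi
  rw [← Finset.prod_pow_eq_pow_sum, ← Finset.prod_pow_eq_pow_sum,
    ← Finset.prod_pow_eq_pow_sum, ← Finset.prod_mul_distrib]
  refine Finset.prod_congr rfl fun x _ => ?_
  simp only [Pi.add_apply, mul_add, neg_one_pow_zmod_add]

lemma lampChi_delta (θ : V → ZMod 2) (z : V) :
    lampChi θ (lampDelta z) = (-1:ℂ) ^ (θ z).val := by
  unfold lampChi lampDelta
  congr 1
  rw [Finset.sum_eq_single z]
  · simp
  · intro x _ hx; simp [hx]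
  · simp

lemma lampChi_comm (θ ω : V → ZMod 2) : lampChi θ ω = lampChi ω θ := by
  unfold lampChi
  congr 1
  exact Finset.sum_congr rfl fun x _ => by rw [mul_comm]

lemma sum_lampChi (σ : V → ZMod 2) :
    ∑ θ : V → ZMod 2, lampChi θ σ
      = if σ = 0 then (2:ℂ) ^ Fintype.card V else 0 := by
  by_cases hs : σ = 0
  · subst hs
    have h1 : ∀ θ : V → ZMod 2, lampChi θ 0 = 1 := by
      intro θ; unfold lampChi; simp
    simp [h1, Fintype.card_fun]
  · simp only [hs, if_false]
    obtain ⟨z, hz⟩ : ∃ z, σ z ≠ 0 := by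
      by_contra hc; push_neg at hc; exact hs (funext fun z => hc z)
    have hz1 : σ z = 1 := (zmod2_em (σ z)).resolve_left hz
    have key : ∑ θ : V → ZMod 2, lampChi (θ + lampDelta z) σ
        = ∑ θ : V → ZMod 2, lampChi θ σ :=
      Fintype.sum_equiv (Equiv.addRight (lampDelta z)) _ _ (fun θ => rfl)
    have step : ∀ θ : V → ZMod 2, lampChi (θ + lampDelta z) σ = - lampChi θ σ := by
      intro θ
      rw [lampChi_comm, lampChi_add, lampChi_delta, hz1, lampChi_comm]
      norm_num [ZMod.val_one]
    have : ∑ θ : V → ZMod 2, lampChi θ σ = - ∑ θ : V → ZMod 2, lampChi θ σ := by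
      calc ∑ θ : V → ZMod 2, lampChi θ σ
          = ∑ θ : V → ZMod 2, lampChi (θ + lampDelta z) σ := key.symm
        _ = ∑ θ : V → ZMod 2, - lampChi θ σ := Finset.sum_congr rfl fun θ _ => step θ
        _ = - ∑ θ : V → ZMod 2, lampChi θ σ := by rw [Finset.sum_neg_distrib]
    linear_combination this / 2

lemma fourier_inv (g : (V → ZMod 2) → ℂ) (σ : V → ZMod 2) :
    ∑ θ : V → ZMod 2, lampChi θ σ *
      ((1 / 2 ^ Fintype.card V : ℂ) * ∑ ω : V → ZMod 2, g ω * lampChi θ ω) = g σ := by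
  have h2 : ((2:ℂ) ^ Fintype.card V) ≠ 0 := pow_ne_zero _ two_ne_zero
  have step1 : ∑ θ : V → ZMod 2, lampChi θ σ *
      ((1 / 2 ^ Fintype.card V : ℂ) * ∑ ω : V → ZMod 2, g ω * lampChi θ ω)
      = ∑ ω : V → ZMod 2, ∑ θ : V → ZMod 2,
          (1 / 2 ^ Fintype.card V : ℂ) * (g ω * lampChi θ (σ + ω)) := by
    simp only [Finset.mul_sum]
    rw [Finset.sum_comm]
    exact Finset.sum_congr rfl fun ω _ => Finset.sum_congr rfl fun θ _ => by
      rw [lampChi_add]; ring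
  rw [step1]
  have step2 : ∀ ω : V → ZMod 2, ∑ θ : V → ZMod 2,
      (1 / 2 ^ Fintype.card V : ℂ) * (g ω * lampChi θ (σ + ω))
      = if ω = σ then g ω else 0 := by
    intro ω
    rw [← Finset.mul_sum, ← Finset.mul_sum, sum_lampChi]
    have hself : σ + σ = 0 := by
      funext t
      show σ t + σ t = 0
      exact (by decide : ∀ a : ZMod 2, a + a = 0) (σ t)
    have : σ + ω = 0 ↔ ω = σ := by
      constructor
      · intro hh
        have h3 : σ + (σ + ω) = σ + 0 := by rw [hh]
        rwa [← add_assoc, hself, zero_add, add_zero] at h3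
      · intro hh; subst hh; exact hself
    rw [if_congr this rfl rfl]
    by_cases hω : ω = σ
    · rw [if_pos hω, if_pos hω]; field_simp
    · rw [if_neg hω, if_neg hω]; ring
  rw [Finset.sum_congr rfl fun ω _ => step2 ω]
  simp

lemma one_add_neg_one_pow (a : ZMod 2) :
    (1:ℂ) + (-1:ℂ) ^ a.val = if a = 0 then 2 else 0 := by
  rcases zmod2_em a with ha | ha <;> subst ha <;>
    norm_num [ZMod.val_one]

/-- If, for each `θ`, `λ_{θ,1}, …, λ_{θ,h(θ)}` are the distinct nonzero
eigenvalues of the self-adjoint operator `M_θ`, with `P_{θ,j}` the orthogonal projection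
onto the eigenspace of `λ_{θ,j}` (so that `M_θ = Σ_j λ_{θ,j} P_{θ,j}` is its spectral
decomposition), then for every `F ∈ L(𝓛(X))`,
`𝓜_X F = Σ_θ Σ_j λ_{θ,j} · (χ_θ ⊗ P_{θ,j}(Q̃_θ F))`,
where `(Q̃_θ F)(x) = 2^{−|X|} Σ_ω F(ω,x) χ_θ(ω)`. -/
theorem vertex_lamplighter_spectral_decomposition
    (G : SimpleGraph V) [DecidableRel G.Adj] (hdeg : ∀ x : V, 0 < G.degree x)
    (h : (V → ZMod 2) → ℕ)
    (lam : (θ : V → ZMod 2) → Fin (h θ) → ℝ)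
    (P : (θ : V → ZMod 2) → Fin (h θ) → ((V → ℂ) →ₗ[ℂ] (V → ℂ)))
    (hlam_ne : ∀ θ j, lam θ j ≠ 0)
    (hlam_inj : ∀ θ, Function.Injective (lam θ))
    (hspec : ∀ θ (f : V → ℂ),
      vertexMtheta G θ f = fun x => ∑ j, (lam θ j : ℂ) * P θ j f x)
    (hproj : ∀ θ (j k : Fin (h θ)) (f : V → ℂ),
      P θ j (P θ k f) = if j = k then P θ j f else 0)
    (hsa : ∀ θ (j : Fin (h θ)) (f g : V → ℂ),
      ∑ x : V, P θ j f x * (starRingEnd ℂ) (g x)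
        = ∑ x : V, f x * (starRingEnd ℂ) (P θ j g x))
    (F : (V → ZMod 2) × V → ℂ) :
    vertexLampM G F
      = fun p => ∑ θ : V → ZMod 2, ∑ j : Fin (h θ), (lam θ j : ℂ) *
          (lampChi θ p.1 *
            (P θ j fun x => (1 / 2 ^ Fintype.card V : ℂ) *
              ∑ ω : V → ZMod 2, F (ω, x) * lampChi θ ω) p.2) := by
  funext p
  obtain ⟨ω, x⟩ := p
  dsimp only
  -- shorthand for the Fourier coefficient
  have hrhs : (∑ θ : V → ZMod 2, ∑ j : Fin (h θ), (lam θ j : ℂ) *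
        (lampChi θ ω * (P θ j fun z => (1 / 2 ^ Fintype.card V : ℂ) *
          ∑ ω' : V → ZMod 2, F (ω', z) * lampChi θ ω') x))
      = ∑ θ : V → ZMod 2, lampChi θ ω *
          vertexMtheta G θ (fun z => (1 / 2 ^ Fintype.card V : ℂ) *
            ∑ ω' : V → ZMod 2, F (ω', z) * lampChi θ ω') x := by
    refine Finset.sum_congr rfl fun θ _ => ?_
    simp only [hspec, Finset.mul_sum]
    exact Finset.sum_congr rfl fun j _ => by ring
  rw [hrhs]
  -- Fourier inversion for F in the lamp coordinate
  have hF : ∀ (σ : V → ZMod 2) (y : V), F (σ, y)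
      = ∑ θ : V → ZMod 2, lampChi θ σ * ((1 / 2 ^ Fintype.card V : ℂ) *
          ∑ ω' : V → ZMod 2, F (ω', y) * lampChi θ ω') :=
    fun σ y => (fourier_inv (fun σ => F (σ, y)) σ).symm
  have hy : ∀ y : V,
      F (ω, y) + F (ω + lampDelta x, y) + F (ω + lampDelta y, y) +
        F (ω + lampDelta x + lampDelta y, y)
      = ∑ θ : V → ZMod 2, lampChi θ ω *
          (((1:ℂ) + (-1:ℂ) ^ (θ x).val) * (((1:ℂ) + (-1:ℂ) ^ (θ y).val) *
            ((1 / 2 ^ Fintype.card V : ℂ) *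
              ∑ ω' : V → ZMod 2, F (ω', y) * lampChi θ ω'))) := by
    intro y
    rw [hF ω y, hF (ω + lampDelta x) y, hF (ω + lampDelta y) y,
      hF (ω + lampDelta x + lampDelta y) y,
      ← Finset.sum_add_distrib, ← Finset.sum_add_distrib, ← Finset.sum_add_distrib]
    refine Finset.sum_congr rfl fun θ _ => ?_
    simp only [lampChi_add, lampChi_delta]
    ring
  unfold vertexLampM
  dsimp only
  rw [Finset.sum_congr rfl fun y _ => hy y, Finset.sum_comm, Finset.mul_sum]
  refine Finset.sum_congr rfl fun θ _ => ?_
  unfold vertexMtheta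
  simp only [one_add_neg_one_pow]
  by_cases hθx : θ x = 0
  · rw [if_pos hθx]
    simp only [hθx, if_true]
    have hd : (G.degree x : ℂ) ≠ 0 := Nat.cast_ne_zero.mpr (hdeg x).ne'
    rw [Finset.sum_filter]
    simp only [Finset.mul_sum]
    refine Finset.sum_congr rfl fun y _ => ?_
    by_cases hθy : θ y = 0
    · simp only [hθy, if_true]
      rw [Finset.mul_sum, Finset.mul_sum]
      refine Finset.sum_congr rfl fun σ _ => ?_
      field_simp
      ring
    · simp only [hθy, if_false]
      simp
  · rw [if_neg hθx]
    simp only [hθx, if_false]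
    simp
end
end

section
/- For the vertex lamplighter walk on the complete graph K_n: if θ ∈ {0,1}^X satisfies |X_θ| > 1, then M_θ = ((|X_θ|−1)/(n−1))·P_θ − (1/(n−1))·(R_θ − P_θ); that is, the nonzero spectrum of M_θ consists of the eigenvalue (|X_θ|−1)/(n−1) with eigenspace the range of P_θ and the eigenvalue −1/(n−1) with eigenspace the range of R_θ − P_θ. If |X_θ| = 1 then M_θ = 0. -/
open Finset

noncomputable section

/-- `X_θ = {x : θ(x) = 0}`, the set of vertices where the lamp is off. -/
def knXtheta (n : ℕ) (θ : Fin n → ZMod 2) : Finset (Fin n) :=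
  univ.filter fun x => θ x = 0

/-- The operator `M_θ` for the vertex lamplighter walk on the complete graph `K_n`
(every vertex has degree `n−1`, and `y ~ x` iff `y ≠ x`):
`(M_θ f)(x) = (1/(n−1)) Σ_{y ∈ X_θ, y ≠ x} f(y)` if `θ(x)=0`, and `0` if `θ(x)=1`. -/
def knMtheta (n : ℕ) (θ : Fin n → ZMod 2) (f : Fin n → ℂ) : Fin n → ℂ := fun x =>
  if θ x = 0 then
    (1 / ((n : ℂ) - 1)) * ∑ y ∈ (knXtheta n θ).filter (fun y => y ≠ x), f y
  else 0

/-- The projector `P_θ`: `(P_θ f)(x) = (1/|X_θ|) Σ_{y ∈ X_θ} f(y)` for `x ∈ X_θ`,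
and `0` otherwise. -/
def knP (n : ℕ) (θ : Fin n → ZMod 2) (f : Fin n → ℂ) : Fin n → ℂ := fun x =>
  if θ x = 0 then (1 / ((knXtheta n θ).card : ℂ)) * ∑ y ∈ knXtheta n θ, f y else 0

/-- The orthogonal projection `R_θ` of `L(X)` onto the functions vanishing outside
`X_θ`. -/
def knR (n : ℕ) (θ : Fin n → ZMod 2) (f : Fin n → ℂ) : Fin n → ℂ := fun x =>
  if θ x = 0 then f x else 0

/-- For the vertex lamplighter walk on the complete graph `K_n`:
if `|X_θ| > 1` then `M_θ = ((|X_θ|−1)/(n−1))·P_θ − (1/(n−1))·(R_θ − P_θ)`, and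
if `|X_θ| = 1` then `M_θ = 0`. -/
theorem complete_graph_Mtheta_decomposition (n : ℕ) (hn : 3 ≤ n) (θ : Fin n → ZMod 2) :
    (1 < (knXtheta n θ).card →
      ∀ (f : Fin n → ℂ) (x : Fin n),
        knMtheta n θ f x
          = (((knXtheta n θ).card : ℂ) - 1) / ((n : ℂ) - 1) * knP n θ f x
            - 1 / ((n : ℂ) - 1) * (knR n θ f x - knP n θ f x))
    ∧ ((knXtheta n θ).card = 1 → ∀ f : Fin n → ℂ, knMtheta n θ f = 0) := by
  have hn1 : ((n : ℂ) - 1) ≠ 0 := by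
    intro h
    have h1 : (n : ℂ) = 1 := by linear_combination h
    have : (n : ℕ) = 1 := by exact_mod_cast h1
    omega
  constructor
  · intro hcard f x
    have hc : ((knXtheta n θ).card : ℂ) ≠ 0 := by
      have h0 : (knXtheta n θ).card ≠ 0 := by omega
      exact_mod_cast h0
    simp only [knMtheta, knP, knR]
    by_cases hx : θ x = 0
    · simp only [hx, if_pos rfl, ↓reduceIte]
      have hmem : x ∈ knXtheta n θ := by simp [knXtheta, hx]
      rw [Finset.filter_ne', Finset.sum_erase_eq_sub hmem]
      field_simp
      ring
    · simp [hx]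
  · intro hcard f
    funext x
    simp only [knMtheta]
    by_cases hx : θ x = 0
    · have hmem : x ∈ knXtheta n θ := by simp [knXtheta, hx]
      obtain ⟨a, ha⟩ := Finset.card_eq_one.mp hcard
      have hxa : x = a := by rw [ha] at hmem; simpa using hmem
      subst hxa
      rw [ha, Finset.filter_ne', Finset.erase_singleton]
      simp
    · simp [hx]
end
end

section
/- For every lamp configuration θ ∈ {0,1}^E and every f ∈ L(X), the Markov operator of the edge lamplighter walk satisfies 𝓜_E(χ_θ ⊗ f) = χ_θ ⊗ (M_θ f). -/
open Finset

noncomputable section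

variable {V : Type*} [Fintype V] [DecidableEq V]

/-- The character `χ_θ(ω) = (−1)^{Σ_{e∈E} θ(e)·ω(e)}` on edge lamp configurations
`{0,1}^E`. -/
def edgeChi (G : SimpleGraph V) [Fintype G.edgeSet] (θ ω : G.edgeSet → ZMod 2) : ℂ :=
  (-1 : ℂ) ^ (∑ e : G.edgeSet, (θ e * ω e).val)

/-- `δ_{{x,y}} ∈ {0,1}^E`, the indicator configuration of the edge `{x,y}`. -/
def edgeDelta (G : SimpleGraph V) (x y : V) : G.edgeSet → ZMod 2 :=
  fun e => if (e : Sym2 V) = s(x, y) then 1 else 0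

/-- The Markov operator `𝓜_E` of the simple random walk on the edge lamplighter graph
`𝓛(E)`: `(𝓜_E F)(ω,x) = (1/(2·deg x)) Σ_{y ~ x} [F(ω,y) + F(ω+δ_{{x,y}},y)]`. -/
def edgeLampM (G : SimpleGraph V) [DecidableRel G.Adj] [Fintype G.edgeSet]
    (F : (G.edgeSet → ZMod 2) × V → ℂ) : (G.edgeSet → ZMod 2) × V → ℂ :=
  fun p =>
    (1 / (2 * (G.degree p.2 : ℂ))) *
      ∑ y ∈ G.neighborFinset p.2, (F (p.1, y) + F (p.1 + edgeDelta G p.2 y, y))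

/-- The operator `M_θ : L(X) → L(X)` for the edge lamplighter walk:
`(M_θ f)(x) = (1/deg x) Σ_{y ~ x, θ({x,y}) = 0} f(y)`. -/
def edgeMtheta (G : SimpleGraph V) [DecidableRel G.Adj] [Fintype G.edgeSet]
    (θ : G.edgeSet → ZMod 2) (f : V → ℂ) : V → ℂ := fun x =>
  (1 / (G.degree x : ℂ)) *
    ∑ y ∈ (G.neighborFinset x).attach,
      if θ ⟨s(x, (y : V)), (SimpleGraph.mem_edgeSet G).mpr
          ((SimpleGraph.mem_neighborFinset _ _ _).mp y.2)⟩ = 0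
      then f (y : V) else 0


lemma eps_add (a b : ZMod 2) : ((-1:ℂ)) ^ ((a + b).val) = (-1) ^ a.val * (-1) ^ b.val := by
  have h : ∀ c : ZMod 2, c = 0 ∨ c = 1 := by decide
  rcases h a with ha | ha <;> rcases h b with hb | hb <;> subst ha <;> subst hb <;>
    norm_num [show ((1 : ZMod 2) + 1) = 0 from by decide,
      show ZMod.val (1 : ZMod 2) = 1 from rfl, show ZMod.val (0 : ZMod 2) = 0 from rfl,
      show ZMod.val (2 : ZMod 2) = 0 from rfl]

lemma edgeChi_prod (G : SimpleGraph V) [Fintype G.edgeSet] (θ ω : G.edgeSet → ZMod 2) :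
    edgeChi G θ ω = ∏ e : G.edgeSet, (-1 : ℂ) ^ ((θ e * ω e).val) := by
  rw [edgeChi, ← Finset.prod_pow_eq_pow_sum]

lemma edgeChi_shift (G : SimpleGraph V) [Fintype G.edgeSet] (θ ω : G.edgeSet → ZMod 2)
    {x y : V} (hadj : G.Adj x y) :
    edgeChi G θ (ω + edgeDelta G x y)
      = edgeChi G θ ω * (-1 : ℂ) ^ ((θ ⟨s(x, y), hadj⟩).val) := by
  classical
  rw [edgeChi_prod, edgeChi_prod]
  have : ∀ e : G.edgeSet,
      (-1 : ℂ) ^ ((θ e * (ω + edgeDelta G x y) e).val)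
        = (-1 : ℂ) ^ ((θ e * ω e).val) * (-1 : ℂ) ^ ((θ e * edgeDelta G x y e).val) := by
    intro e
    rw [Pi.add_apply, mul_add, eps_add]
  rw [Finset.prod_congr rfl (fun e _ => this e), Finset.prod_mul_distrib]
  congr 1
  have he : ∀ e : G.edgeSet, θ e * edgeDelta G x y e
      = if e = ⟨s(x, y), hadj⟩ then θ ⟨s(x, y), hadj⟩ else 0 := by
    intro e
    simp only [edgeDelta]
    by_cases h : e = ⟨s(x, y), hadj⟩
    · subst h; simp
    · have h' : (e : Sym2 V) ≠ s(x, y) := by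
        intro hc; exact h (Subtype.ext hc)
      simp [h', h]
  rw [Finset.prod_congr rfl (fun e _ => by rw [he e])]
  rw [Finset.prod_eq_single (⟨s(x, y), hadj⟩ : G.edgeSet)]
  · simp
  · intro b _ hb; simp [hb]
  · intro h; exact absurd (Finset.mem_univ _) h

/-- For every edge lamp configuration `θ ∈ {0,1}^E` and every
`f ∈ L(X)`, `𝓜_E(χ_θ ⊗ f) = χ_θ ⊗ (M_θ f)`. -/
theorem edge_lamplighter_intertwine (G : SimpleGraph V) [DecidableRel G.Adj]
    [Fintype G.edgeSet] (hdeg : ∀ x : V, 0 < G.degree x)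
    (θ : G.edgeSet → ZMod 2) (f : V → ℂ) :
    edgeLampM G (fun p => edgeChi G θ p.1 * f p.2)
      = fun p => edgeChi G θ p.1 * edgeMtheta G θ f p.2 := by
  classical
  funext p
  obtain ⟨ω, x⟩ := p
  have hd : (G.degree x : ℂ) ≠ 0 := by
    exact_mod_cast (hdeg x).ne'
  have h01 : ∀ c : ZMod 2, c = 0 ∨ c = 1 := by decide
  simp only [edgeLampM, edgeMtheta]
  rw [← Finset.sum_attach (G.neighborFinset x)
    (fun y => edgeChi G θ ω * f y + edgeChi G θ (ω + edgeDelta G x y) * f y)]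
  have hsum : ∀ y ∈ (G.neighborFinset x).attach,
      edgeChi G θ ω * f (y : V) + edgeChi G θ (ω + edgeDelta G x (y : V)) * f (y : V)
        = edgeChi G θ ω * (2 * (if θ ⟨s(x, (y : V)), (SimpleGraph.mem_edgeSet G).mpr
            ((SimpleGraph.mem_neighborFinset _ _ _).mp y.2)⟩ = 0
          then f (y : V) else 0)) := by
    rintro ⟨y, hy⟩ -
    have hadj : G.Adj x y := (SimpleGraph.mem_neighborFinset _ _ _).mp hy
    rw [edgeChi_shift G θ ω hadj]
    rcases h01 (θ ⟨s(x, y), hadj⟩) with h | h <;> rw [h] <;>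
      simp [show ZMod.val (1 : ZMod 2) = 1 from rfl,
        show ZMod.val (0 : ZMod 2) = 0 from rfl] <;> ring
  calc (1 / (2 * (G.degree x : ℂ))) * ∑ y ∈ (G.neighborFinset x).attach,
        (edgeChi G θ ω * f (y : V) + edgeChi G θ (ω + edgeDelta G x (y : V)) * f (y : V))
      = (1 / (2 * (G.degree x : ℂ))) * ∑ y ∈ (G.neighborFinset x).attach,
        edgeChi G θ ω * (2 * (if θ ⟨s(x, (y : V)), (SimpleGraph.mem_edgeSet G).mpr
            ((SimpleGraph.mem_neighborFinset _ _ _).mp y.2)⟩ = 0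
          then f (y : V) else 0)) := by
        rw [Finset.sum_congr rfl hsum]
    _ = edgeChi G θ ω * ((1 / (G.degree x : ℂ)) * ∑ y ∈ (G.neighborFinset x).attach,
          (if θ ⟨s(x, (y : V)), (SimpleGraph.mem_edgeSet G).mpr
            ((SimpleGraph.mem_neighborFinset _ _ _).mp y.2)⟩ = 0
          then f (y : V) else 0)) := by
        rw [← Finset.mul_sum, ← Finset.mul_sum]
        field_simp
end
end
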